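/- Let C be a set of s vertices together with a root vertex ρ, and assign a nonnegative conductance c_e to each edge (each pair of distinct vertices of C ∪ {ρ}), such that: the sum of the conductances of edges with both endpoints in C is an integer at least s − 1; the sum of the conductances of edges from C to ρ is an integer at least s; and the total conductance over all edges is m = 2s − 1 + t for a nonnegative integer t. Then the total effective resistance to the root satisfies ∑_{x ∈ C} R_{xρ} ≥ s − 2(m − s)/3, i.e. ≥ (s+2)/3 − 2t/3, and equality is possible only when m = 2s − 1 (i.e. t = 0). -/

import Mathlib

open scoped ENNReal

set_option linter.unusedSectionVars false

attribute [local instance 10] Classical.propDecidable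

/-- A multigraph (parallel edges allowed): a finite edge type with two endpoint maps. -/
structure Multigraph (V : Type) where
  E : Type
  [fE : Fintype E]
  fst : E → V
  snd : E → V

attribute [instance] Multigraph.fE

namespace Multigraph

variable {V : Type} [Fintype V] [DecidableEq V]

/-- The number of edges of a multigraph. -/
noncomputable def edgeCount (G : Multigraph V) : ℕ := Fintype.card G.E

/-- The net current flowing out of `v` under the current assignment `f`
(the current `f e` flows from `G.fst e` to `G.snd e`). -/
noncomputable def netFlow (G : Multigraph V) (f : G.E → ℝ) (v : V) : ℝ :=
  ∑ e : G.E, ((if G.fst e = v then f e else 0) - (if G.snd e = v then f e else 0))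

/-- A unit flow from `x` to `y`: Kirchhoff's current law holds at every vertex other
than `x` and `y`, and the net current out of `x` is `1`. -/
def IsUnitFlow (G : Multigraph V) (x y : V) (f : G.E → ℝ) : Prop :=
  G.netFlow f x = 1 ∧ ∀ v : V, v ≠ x → v ≠ y → G.netFlow f v = 0

/-- The effective resistance between `x` and `y`: the least energy `∑ e, (I e)^2` of a
unit flow from `x` to `y` (`∞` if there is no such flow, `0` if `x = y`). -/
noncomputable def effRes (G : Multigraph V) (x y : V) : ℝ≥0∞ :=
  if x = y then 0
  else ⨅ f : {f : G.E → ℝ // G.IsUnitFlow x y f}, ENNReal.ofReal (∑ e : G.E, (f.1 e) ^ 2)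

/-- Adjacency in a multigraph. -/
def Adj (G : Multigraph V) (u v : V) : Prop :=
  ∃ e : G.E, (G.fst e = u ∧ G.snd e = v) ∨ (G.fst e = v ∧ G.snd e = u)

/-- A multigraph is connected if every vertex is reachable from every other. -/
def Connected (G : Multigraph V) : Prop :=
  ∀ u v : V, Relation.ReflTransGen G.Adj u v

/-- The degree of a vertex (loops count twice). -/
noncomputable def degree (G : Multigraph V) (v : V) : ℕ :=
  (Finset.univ.filter fun e : G.E => G.fst e = v).card +
    (Finset.univ.filter fun e : G.E => G.snd e = v).card

/-- The number of leaves (vertices of degree 1). -/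
noncomputable def leafCount (G : Multigraph V) : ℕ :=
  (Finset.univ.filter fun v : V => G.degree v = 1).card

/-- `A(G)`: the average effective resistance over unordered pairs of distinct vertices. -/
noncomputable def avgPairRes (G : Multigraph V) : ℝ≥0∞ :=
  (∑ x : V, ∑ y : V, G.effRes x y) / (2 * ((Fintype.card V).choose 2 : ℝ≥0∞))

/-- `A'(G)`: the average effective resistance over ordered pairs of vertices. -/
noncomputable def avgOrdRes (G : Multigraph V) : ℝ≥0∞ :=
  (∑ x : V, ∑ y : V, G.effRes x y) / ((Fintype.card V : ℝ≥0∞) ^ 2)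

/-- The total effective resistance to the root `ρ`. -/
noncomputable def Rtot (G : Multigraph V) (ρ : V) : ℝ≥0∞ := ∑ x : V, G.effRes ρ x

/-- `B(G)`: the average resistance of a non-root vertex to the root `ρ`. -/
noncomputable def rootedAvg (G : Multigraph V) (ρ : V) : ℝ≥0∞ :=
  G.Rtot ρ / ((Fintype.card V - 1 : ℕ) : ℝ≥0∞)

/-- A tree: a connected multigraph with one more vertex than edge. -/
def IsTree (G : Multigraph V) : Prop := G.Connected ∧ G.edgeCount + 1 = Fintype.card V

/-- `v` is within distance `ℓ` of `x` (there is a lazy walk of length `ℓ` from `x` to `v`). -/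
def WithinDist (G : Multigraph V) (ℓ : ℕ) (x v : V) : Prop :=
  ∃ p : ℕ → V, p 0 = x ∧ p ℓ = v ∧ ∀ i, i < ℓ → p i = p (i + 1) ∨ G.Adj (p i) (p (i + 1))

end Multigraph

open Multigraph

/-- `b_n(α)`: the least value of `B(G)` over rooted graphs with `n` non-root vertices
and at most `αn/2` edges (the root may be any vertex). -/
noncomputable def bFun (n : ℕ) (α : ℝ) : ℝ≥0∞ :=
  ⨅ G : {p : Multigraph (Fin (n + 1)) × Fin (n + 1) // (p.1.edgeCount : ℝ) ≤ α * n / 2},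
    rootedAvg G.1.1 G.1.2

/-- `a_n(α)`: the least value of `A'(G)` over graphs with `n` vertices and at most
`αn/2` edges. -/
noncomputable def aFun (n : ℕ) (α : ℝ) : ℝ≥0∞ :=
  ⨅ G : {G : Multigraph (Fin n) // (G.edgeCount : ℝ) ≤ α * n / 2}, avgOrdRes G.1

/-- `G_S`: add a new root vertex `Fin.last n` joined by one edge to each entry of the
`s`-tuple (multiset) `S`. -/
noncomputable def addRoot {n : ℕ} (G : Multigraph (Fin n)) {s : ℕ} (S : Fin s → Fin n) :
    Multigraph (Fin (n + 1)) where
  E := G.E ⊕ Fin s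
  fst := Sum.elim (fun e => (G.fst e).castSucc) fun _ => Fin.last n
  snd := Sum.elim (fun e => (G.snd e).castSucc) fun i => (S i).castSucc

section Trees

variable {V : Type} [Fintype V] [DecidableEq V]

/-- The map identifying all leaves of `T` to the single new vertex `Sum.inr ()`. -/
noncomputable def leafId (T : Multigraph V) (v : V) : V ⊕ Unit :=
  if T.degree v = 1 then Sum.inr () else Sum.inl v

/-- The multigraph obtained from `T` by identifying all its leaves to one vertex. -/
noncomputable def identifyLeaves (T : Multigraph V) : Multigraph (V ⊕ Unit) where
  E := T.E
  fst := fun e => leafId T (T.fst e)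
  snd := fun e => leafId T (T.snd e)

/-- `R(x,T)`: the effective resistance between `x` and the vertex obtained by
identifying all the leaves of `T`. -/
noncomputable def treeRes (T : Multigraph V) (x : V) : ℝ≥0∞ :=
  (identifyLeaves T).effRes (leafId T x) (Sum.inr ())

/-- The rooted graph formed from `T` and a set `S` of sinks: add a root `Sum.inr ()`
joined to each `v ∈ S` by `degree v - 1` parallel edges. -/
noncomputable def randRooted (T : Multigraph V) (S : Finset V) : Multigraph (V ⊕ Unit) where
  E := T.E ⊕ (Σ v : {v : V // v ∈ S}, Fin (T.degree v.1 - 1))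
  fst := Sum.elim (fun e => Sum.inl (T.fst e)) fun p => Sum.inl p.1.1
  snd := Sum.elim (fun e => Sum.inl (T.snd e)) fun _ => Sum.inr ()

/-- The subgraph induced on the vertices satisfying `P`. -/
noncomputable def inducedSub (G : Multigraph V) (P : V → Prop) : Multigraph {v : V // P v} where
  E := {e : G.E // P (G.fst e) ∧ P (G.snd e)}
  fst := fun e => ⟨G.fst e.1, e.2.1⟩
  snd := fun e => ⟨G.snd e.1, e.2.2⟩

lemma withinDist_self (G : Multigraph V) (ℓ : ℕ) (x : V) : G.WithinDist ℓ x x :=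
  ⟨fun _ => x, rfl, rfl, fun _ _ => Or.inl rfl⟩

/-- `R(x, T_x)` where `T_x` is the subgraph of `G` induced by the vertices within
distance `ℓ` of `x`. -/
noncomputable def localRes (G : Multigraph V) (ℓ : ℕ) (x : V) : ℝ≥0∞ :=
  treeRes (inducedSub G (G.WithinDist ℓ x)) ⟨x, withinDist_self G ℓ x⟩

/-- cyclic successor on `Fin k` -/
def cycSucc {k : ℕ} (i : Fin k) : Fin k :=
  ⟨(i.1 + 1) % k, Nat.mod_lt _ (Nat.lt_of_le_of_lt (Nat.zero_le i.1) i.isLt)⟩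

/-- `G` contains a cycle with `k` (distinct) vertices and `k` distinct edges. -/
def HasCycleLength (G : Multigraph V) (k : ℕ) : Prop :=
  0 < k ∧ ∃ (v : Fin k → V) (e : Fin k → G.E), Function.Injective v ∧ Function.Injective e ∧
    ∀ i : Fin k, (G.fst (e i) = v i ∧ G.snd (e i) = v (cycSucc i)) ∨
      (G.fst (e i) = v (cycSucc i) ∧ G.snd (e i) = v i)

/-- `G⁺/x`: delete the two edges `e₁, e₂` at the degree-2 vertex `x`, add an edge
`y₁y₂` (contracting `y₁x`), and reuse `x` as a new leaf attached to the root `ρ`. -/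
noncomputable def contractPlus (G : Multigraph V) (x ρ : V) (e₁ e₂ : G.E) (y₁ y₂ : V) :
    Multigraph V where
  E := {e : G.E // e ≠ e₁ ∧ e ≠ e₂} ⊕ Fin 2
  fst := Sum.elim (fun e => G.fst e.1) fun i => if i = 0 then y₁ else x
  snd := Sum.elim (fun e => G.snd e.1) fun i => if i = 0 then y₂ else ρ

end Trees

/-- A Queen-Bee network: every non-root vertex is joined to the root. -/
def QueenBee {n : ℕ} (G : Multigraph (Fin (n + 1))) (ρ : Fin (n + 1)) : Prop :=
  ∀ v : Fin (n + 1), v ≠ ρ → G.Adj ρ v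

section Weighted

variable {V : Type} [Fintype V] [DecidableEq V]

/-- A unit flow from `x` to `y` in a weighted network with conductances `c`:
antisymmetric, zero on edges of zero conductance, and satisfying Kirchhoff's
current law away from `x` and `y`, with net current `1` out of `x`. -/
def IsWUnitFlow (c : V → V → ℝ) (x y : V) (f : V → V → ℝ) : Prop :=
  (∀ u v, f u v = - f v u) ∧ (∀ u v, c u v = 0 → f u v = 0) ∧
    (∑ v : V, f x v) = 1 ∧ ∀ u : V, u ≠ x → u ≠ y → (∑ v : V, f u v) = 0

/-- The effective resistance between `x` and `y` in the weighted network with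
conductances `c`: the least energy `∑_{uv} I_{uv}²/c_{uv}` of a unit flow. -/
noncomputable def weffRes (c : V → V → ℝ) (x y : V) : ℝ≥0∞ :=
  if x = y then 0
  else ⨅ f : {f : V → V → ℝ // IsWUnitFlow c x y f},
    ENNReal.ofReal ((1 / 2) * ∑ u : V, ∑ v : V, (f.1 u v) ^ 2 / c u v)

end Weighted

/-!
Fix `x ∈ C` and a unit flow from `x` to the root `ρ` sending `p` along the edge `xρ`. The
remaining current `1 - p` leaves `x` through its other edges and enters `ρ` through the other
edges at `ρ`; these two edge sets and `{xρ}` are disjoint, so Cauchy–Schwarz with weights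
`1, θ, 1 - θ` bounds the energy below by `1 / Y_x`, where
`Y_x = c_{xρ} + θ² (deg x - c_{xρ}) + (1 - θ)² (deg ρ - c_{xρ})`.
Take `θ = s/(s+2)`. For `s ≥ 2`, replacing `1/Y` by its tangent line at `Y = 3s/(s+2)` makes the
bound linear in the conductances; summed over `x` it depends only on the totals `k` (inside `C`)
and `j` (to the root), and exceeds `(s+2)/3 - 2t/3` by at least `2t/(9s)`. For `s = 1` the
bound is at least `1/(1+t)`, which beats `1 - 2t/3` strictly for every integer `t ≥ 1`.
-/

open Finset

lemma sq_le_mul_sq_div {R : Type*} [Field R] [LinearOrder R] {w g : R} (hg : w = 0 → g = 0) :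
    g ^ 2 ≤ w * (g ^ 2 / w) := by
  rcases eq_or_ne w 0 with h | h
  · simp [h, hg h]
  · rw [mul_div_cancel₀ _ h]

lemma Finset.sq_sum_le_sum_mul_sum_sq_div {ι R : Type*} [Field R] [LinearOrder R]
    [IsStrictOrderedRing R] (s : Finset ι) {w g : ι → R}
    (hw : ∀ i ∈ s, 0 ≤ w i) (hg : ∀ i ∈ s, w i = 0 → g i = 0) :
    (∑ i ∈ s, g i) ^ 2 ≤ (∑ i ∈ s, w i) * ∑ i ∈ s, g i ^ 2 / w i :=
  sum_sq_le_sum_mul_sum_of_sq_le_mul s hw (fun i hi => div_nonneg (sq_nonneg _) (hw i hi))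
    fun i hi => sq_le_mul_sq_div (hg i hi)

lemma one_le_mul_of_sq_le_mul {p a b d A B D θ : ℝ} (ha : 0 ≤ a) (hb : 0 ≤ b) (hd : 0 ≤ d)
    (hA : 0 ≤ A) (hB : 0 ≤ B) (hD : 0 ≤ D) (hpA : p ^ 2 ≤ a * A)
    (hqB : (1 - p) ^ 2 ≤ b * B) (hqD : (1 - p) ^ 2 ≤ d * D) :
    1 ≤ (a + θ ^ 2 * b + (1 - θ) ^ 2 * d) * (A + B + D) := by
  have key := sum_sq_le_sum_mul_sum_of_sq_le_mul univ
    (r := ![p, θ * (1 - p), (1 - θ) * (1 - p)]) (f := ![a, θ ^ 2 * b, (1 - θ) ^ 2 * d])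
    (g := ![A, B, D])
    (fun i _ => by fin_cases i <;> simp <;> positivity)
    (fun i _ => by fin_cases i <;> simpa)
    (fun i _ => by
      fin_cases i
      · exact hpA
      all_goals simp only [Fin.reduceFinMk, Matrix.cons_val, mul_pow, mul_assoc]; gcongr)
  have hsq : (p + θ * (1 - p) + (1 - θ) * (1 - p)) ^ 2 = 1 := by ring
  simp only [Fin.sum_univ_three, Matrix.cons_val] at key
  rwa [hsq] at key

lemma Finset.sum_eq_add_add_sum_compl_pair {V M : Type*} [Fintype V] [DecidableEq V]
    [AddCommMonoid M] {x y : V} (hxy : x ≠ y) (g : V → M) :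
    ∑ v, g v = g x + g y + ∑ v ∈ ({x, y} : Finset V)ᶜ, g v := by
  rw [← sum_pair hxy, add_comm, sum_compl_add_sum]

section WeightedNetwork

variable {V : Type} [Fintype V] [DecidableEq V]

noncomputable def wEnergy (c f : V → V → ℝ) : ℝ := (1 / 2) * ∑ u, ∑ v, f u v ^ 2 / c u v

lemma add_sum_compl_pair_le_half_sum {T : V → V → ℝ} (hT : ∀ u v, 0 ≤ T u v)
    (hsymm : ∀ u v, T u v = T v u) {x y : V} (hxy : x ≠ y) :
    T x y + ∑ v ∈ ({x, y} : Finset V)ᶜ, T x v + ∑ v ∈ ({x, y} : Finset V)ᶜ, T v y ≤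
      (1 / 2) * ∑ u, ∑ v, T u v := by
  have hrow := fun u => sum_eq_add_add_sum_compl_pair hxy (T u)
  have hrest : ∑ u ∈ ({x, y} : Finset V)ᶜ, T x u + ∑ u ∈ ({x, y} : Finset V)ᶜ, T u y ≤
      ∑ u ∈ ({x, y} : Finset V)ᶜ, ∑ v, T u v := by
    rw [← sum_add_distrib]
    refine sum_le_sum fun u _ => ?_
    rw [hsymm x u, hrow u]
    linarith [sum_nonneg fun v (_ : v ∈ ({x, y} : Finset V)ᶜ) => hT u v]
  have hy : ∑ v ∈ ({x, y} : Finset V)ᶜ, T y v = ∑ v ∈ ({x, y} : Finset V)ᶜ, T v y :=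
    sum_congr rfl fun v _ => hsymm y v
  rw [sum_eq_add_add_sum_compl_pair hxy, hrow x, hrow y, hsymm y x, hy]
  linarith [hT x x, hT y y]

namespace IsWUnitFlow

variable {c f : V → V → ℝ} {x y : V}

lemma apply_self (hf : IsWUnitFlow c x y f) (u : V) : f u u = 0 := by
  linarith [hf.1 u u]

lemma sum_apply_target (hf : IsWUnitFlow c x y f) (hxy : x ≠ y) : ∑ v, f v y = 1 := by
  obtain ⟨hanti, -, hx, hkir⟩ := hf
  have hzero : ∑ u, ∑ v, f u v = 0 := by
    have : ∑ u, ∑ v, f u v = -∑ u, ∑ v, f u v := by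
      conv_lhs => rw [sum_comm]
      rw [← sum_neg_distrib]
      exact sum_congr rfl fun v _ => by
        rw [← sum_neg_distrib]
        exact sum_congr rfl fun u _ => hanti u v
    linarith
  have hrest : ∑ u ∈ ({x, y} : Finset V)ᶜ, ∑ v, f u v = 0 := sum_eq_zero fun u hu => by
    simp only [mem_compl, mem_insert, mem_singleton, not_or] at hu
    exact hkir u hu.1 hu.2
  rw [sum_eq_add_add_sum_compl_pair hxy, hx, hrest] at hzero
  rw [sum_congr rfl fun v _ => hanti v y, sum_neg_distrib]
  linarith

lemma sum_compl_pair_from_source (hf : IsWUnitFlow c x y f) (hxy : x ≠ y) :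
    ∑ v ∈ ({x, y} : Finset V)ᶜ, f x v = 1 - f x y := by
  have := hf.2.2.1
  rw [sum_eq_add_add_sum_compl_pair hxy, hf.apply_self] at this
  linarith

lemma sum_compl_pair_to_target (hf : IsWUnitFlow c x y f) (hxy : x ≠ y) :
    ∑ v ∈ ({x, y} : Finset V)ᶜ, f v y = 1 - f x y := by
  have := hf.sum_apply_target hxy
  rw [sum_eq_add_add_sum_compl_pair hxy (fun v => f v y), hf.apply_self] at this
  linarith

end IsWUnitFlow

end WeightedNetwork

section ThomsonBound

variable {V : Type} [Fintype V] [DecidableEq V]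

noncomputable def conductanceBound (c : V → V → ℝ) (θ : ℝ) (x y : V) : ℝ :=
  c x y + θ ^ 2 * (∑ v, c x v - c x y) + (1 - θ) ^ 2 * (∑ v, c v y - c x y)

variable {c f : V → V → ℝ} {x y : V}

lemma IsWUnitFlow.one_le_conductanceBound_mul_wEnergy (hsymm : ∀ u v, c u v = c v u)
    (hnonneg : ∀ u v, 0 ≤ c u v) (hloop : ∀ v, c v v = 0) (hf : IsWUnitFlow c x y f)
    (hxy : x ≠ y) (θ : ℝ) : 1 ≤ conductanceBound c θ x y * wEnergy c f := by
  have ⟨hanti, hsupp, _⟩ := hf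
  set T : V → V → ℝ := fun u v => f u v ^ 2 / c u v
  have hT : ∀ u v, 0 ≤ T u v := fun u v => div_nonneg (sq_nonneg _) (hnonneg u v)
  have hTsymm : ∀ u v, T u v = T v u := fun u v => by
    simp only [T, hanti u v, neg_sq, hsymm u v]
  have hcut := add_sum_compl_pair_le_half_sum hT hTsymm hxy
  have hout : ∑ v, c x v - c x y = ∑ v ∈ ({x, y} : Finset V)ᶜ, c x v := by
    rw [sum_eq_add_add_sum_compl_pair hxy, hloop]; ring
  have hin : ∑ v, c v y - c x y = ∑ v ∈ ({x, y} : Finset V)ᶜ, c v y := by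
    rw [sum_eq_add_add_sum_compl_pair hxy (fun v => c v y), hloop]; ring
  have hout0 : 0 ≤ ∑ v ∈ ({x, y} : Finset V)ᶜ, c x v := sum_nonneg fun v _ => hnonneg x v
  have hin0 : 0 ≤ ∑ v ∈ ({x, y} : Finset V)ᶜ, c v y := sum_nonneg fun v _ => hnonneg v y
  have hstar := one_le_mul_of_sq_le_mul (θ := θ) (hnonneg x y) hout0 hin0 (hT x y)
    (sum_nonneg fun v _ => hT x v) (sum_nonneg fun v _ => hT v y)
    (sq_le_mul_sq_div (hsupp x y))
    (hf.sum_compl_pair_from_source hxy ▸ sq_sum_le_sum_mul_sum_sq_div _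
      (fun v _ => hnonneg x v) fun v _ => hsupp x v)
    (hf.sum_compl_pair_to_target hxy ▸ sq_sum_le_sum_mul_sum_sq_div _
      (fun v _ => hnonneg v y) fun v _ => hsupp v y)
  rw [conductanceBound, hout, hin]
  exact hstar.trans (mul_le_mul_of_nonneg_left hcut (by have := hnonneg x y; positivity))

lemma wEnergy_nonneg (hnonneg : ∀ u v, 0 ≤ c u v) (f : V → V → ℝ) : 0 ≤ wEnergy c f :=
  mul_nonneg (by norm_num) <| sum_nonneg fun u _ => sum_nonneg fun v _ =>
    div_nonneg (sq_nonneg _) (hnonneg u v)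

lemma ofReal_inv_conductanceBound_le_weffRes (hsymm : ∀ u v, c u v = c v u)
    (hnonneg : ∀ u v, 0 ≤ c u v) (hloop : ∀ v, c v v = 0) (hxy : x ≠ y) (θ : ℝ) :
    ENNReal.ofReal (1 / conductanceBound c θ x y) ≤ weffRes c x y := by
  rw [weffRes, if_neg hxy]
  refine le_iInf fun f => ENNReal.ofReal_le_ofReal ?_
  have h := f.2.one_le_conductanceBound_mul_wEnergy hsymm hnonneg hloop hxy θ
  have hE := wEnergy_nonneg hnonneg f.1
  have hY : 0 < conductanceBound c θ x y := pos_of_mul_pos_left (by linarith) hE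
  exact (div_le_iff₀ hY).2 (by rw [mul_comm]; exact h)

end ThomsonBound

lemma two_div_sub_div_sq_le_one_div {D Y : ℝ} (hD : 0 < D) (hY : 0 < Y) :
    2 / D - Y / D ^ 2 ≤ 1 / Y := by
  rw [div_sub_div _ _ hD.ne' (by positivity), div_le_div_iff₀ (by positivity) hY]
  nlinarith [sq_nonneg (Y - D), mul_pos hD hY]

section LegalComponent

variable {s : ℕ} {j k : ℝ} {a b Y : Fin s → ℝ}

lemma le_sum_inv_of_two_le (hs : 2 ≤ s) {t : ℝ} (hj : s ≤ j) (hk : s - 1 ≤ k)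
    (ht : k + j = 2 * s - 1 + t) (ha : ∑ x, a x = j) (hb : ∑ x, b x = 2 * k)
    (hYpos : ∀ x, 0 < Y x)
    (hY : ∀ x, Y x = a x + (s / (s + 2)) ^ 2 * b x + (1 - s / (s + 2)) ^ 2 * (j - a x)) :
    (s + 2) / 3 - 2 * t / 3 + 2 * t / (9 * s) ≤ ∑ x, 1 / Y x := by
  have hs' : (2 : ℝ) ≤ s := by exact_mod_cast hs
  have hD : (0 : ℝ) < 3 * s / (s + 2) := by positivity
  have htangent : ∑ x, (2 / (3 * s / (s + 2)) - Y x / (3 * s / (s + 2)) ^ 2) ≤ ∑ x, 1 / Y x :=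
    sum_le_sum fun x _ => two_div_sub_div_sq_le_one_div hD (hYpos x)
  have hsumY : ∑ x, Y x =
      j + (s / (s + 2)) ^ 2 * (2 * k) + (1 - s / (s + 2)) ^ 2 * ((s - 1) * j) := by
    simp only [hY, sum_add_distrib, ← mul_sum, sum_sub_distrib, ha, hb, sum_const, card_univ,
      Fintype.card_fin, nsmul_eq_mul]
    ring
  rw [sum_sub_distrib, sum_const, ← sum_div, hsumY, card_univ, Fintype.card_fin,
    nsmul_eq_mul] at htangent
  refine le_trans (sub_nonneg.1 ?_) htangent
  have hslack : s * (2 / (3 * s / (s + 2))) - (j + (s / (s + 2)) ^ 2 * (2 * k) +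
      (1 - s / (s + 2)) ^ 2 * ((s - 1) * j)) / (3 * s / (s + 2)) ^ 2 -
      ((s + 2) / 3 - 2 * t / 3 + 2 * t / (9 * s)) =
      ((j - s) * (5 * s - 10) + (k - s + 1) * (4 * s - 2)) / (9 * s) := by
    rw [show t = k + j - (2 * s - 1) by linarith]
    field_simp
    ring
  rw [hslack]
  have : (0 : ℝ) ≤ (j - s) * (5 * s - 10) := mul_nonneg (by linarith) (by linarith)
  have : (0 : ℝ) ≤ (k - s + 1) * (4 * s - 2) := mul_nonneg (by linarith) (by linarith)
  positivity

lemma legal_component_sum_inv_bound (hs : 1 ≤ s) {t : ℕ} (hj : s ≤ j) (hk : s - 1 ≤ k)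
    (ht : k + j = 2 * s - 1 + t) (ha0 : ∀ x, 0 ≤ a x) (hb0 : ∀ x, 0 ≤ b x)
    (ha : ∑ x, a x = j) (hb : ∑ x, b x = 2 * k)
    (hY : ∀ x, Y x = a x + (s / (s + 2)) ^ 2 * b x + (1 - s / (s + 2)) ^ 2 * (j - a x)) :
    0 < ∑ x, 1 / Y x ∧ ((s : ℝ) + 2) / 3 - 2 * t / 3 ≤ ∑ x, 1 / Y x ∧
      (t ≠ 0 → ((s : ℝ) + 2) / 3 - 2 * t / 3 < ∑ x, 1 / Y x) := by
  have hs' : (1 : ℝ) ≤ s := by exact_mod_cast hs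
  have hμ : 1 - (s : ℝ) / (s + 2) = 2 / (s + 2) := by field_simp; ring
  have hμ1 : (2 / (s + 2) : ℝ) ^ 2 ≤ 1 :=
    pow_le_one₀ (by positivity) (by rw [div_le_one] <;> linarith)
  have hYpos : ∀ x, 0 < Y x := fun x => by
    have hax : a x ≤ j := ha ▸ single_le_sum (fun y _ => ha0 y) (mem_univ x)
    have : 0 ≤ (s / (s + 2) : ℝ) ^ 2 * b x := mul_nonneg (sq_nonneg _) (hb0 x)
    have : (2 / (s + 2) : ℝ) ^ 2 * a x ≤ a x := mul_le_of_le_one_left (ha0 x) hμ1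
    have : (0 : ℝ) < (2 / (s + 2)) ^ 2 * j := mul_pos (by positivity) (by linarith)
    rw [hY, hμ]
    linarith
  refine ⟨sum_pos (fun x _ => one_div_pos.2 (hYpos x)) ⟨⟨0, hs⟩, mem_univ _⟩, ?_⟩
  rcases hs.eq_or_lt with rfl | hs2
  · simp only [Fin.sum_univ_one] at ha hb ⊢
    have hY0 : Y 0 ≤ 1 + t := by rw [hY, ha, hb]; push_cast at ht hk ⊢; nlinarith
    have hinv := one_div_le_one_div_of_le (hYpos 0) hY0
    have hstrict : t ≠ 0 → ((1 : ℕ) + 2 : ℝ) / 3 - 2 * t / 3 < 1 / (1 + t) := fun ht0 => by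
      have : (1 : ℝ) ≤ t := by exact_mod_cast Nat.one_le_iff_ne_zero.2 ht0
      rw [lt_div_iff₀ (by linarith)]
      push_cast
      nlinarith
    refine ⟨?_, fun ht0 => (hstrict ht0).trans_le hinv⟩
    rcases eq_or_ne t 0 with rfl | ht0
    · norm_num at hinv ⊢; exact hinv
    · exact (hstrict ht0).le.trans hinv
  · have := le_sum_inv_of_two_le hs2 hj hk ht ha hb hYpos hY
    have : (0 : ℝ) ≤ 2 * t / (9 * s) := by positivity
    refine ⟨by linarith, fun ht0 => ?_⟩
    have : (0 : ℝ) < 2 * t / (9 * s) := by positivity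
    linarith

end LegalComponent

lemma conductanceBound_inl_inr {α : Type} [Fintype α] [DecidableEq α]
    {c : α ⊕ Unit → α ⊕ Unit → ℝ} (hloop : ∀ v, c v v = 0) (θ : ℝ) (x : α) :
    conductanceBound c θ (Sum.inl x) (Sum.inr ()) =
      c (Sum.inl x) (Sum.inr ()) + θ ^ 2 * ∑ y, c (Sum.inl x) (Sum.inl y) +
        (1 - θ) ^ 2 * (∑ y, c (Sum.inl y) (Sum.inr ()) - c (Sum.inl x) (Sum.inr ())) := by
  simp only [conductanceBound, Fintype.sum_sum_type, univ_unique, sum_singleton,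
    PUnit.default_eq_unit, hloop]
  ring

/-- **Lemma (legal Queen-Bee components).** Let `C` be a set of `s` vertices together
with a root `ρ`, with nonnegative conductances on all edges such that: the total
conductance inside `C` is an integer at least `s-1`, the total conductance from `C` to
`ρ` is an integer at least `s`, and the total conductance is `m = 2s - 1 + t` for a
nonnegative integer `t`.  Then `∑_{x ∈ C} R_{xρ} ≥ (s+2)/3 - 2t/3 (= s - 2(m-s)/3)`,
with equality possible only when `t = 0` (i.e. `m = 2s - 1`). -/
theorem stmt17 (s : ℕ) (hs : 1 ≤ s) (t m : ℕ) (hm : m = 2 * s - 1 + t)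
    (c : (Fin s ⊕ Unit) → (Fin s ⊕ Unit) → ℝ)
    (hsymm : ∀ u v, c u v = c v u) (hnonneg : ∀ u v, 0 ≤ c u v)
    (hloop : ∀ v, c v v = 0)
    (hint : ∃ k : ℕ, s - 1 ≤ k ∧
      (1 / 2) * (∑ u : Fin s, ∑ v : Fin s, c (Sum.inl u) (Sum.inl v)) = (k : ℝ))
    (hroot : ∃ j : ℕ, s ≤ j ∧ (∑ u : Fin s, c (Sum.inl u) (Sum.inr ())) = (j : ℝ))
    (htot : (1 / 2) * (∑ u : Fin s, ∑ v : Fin s, c (Sum.inl u) (Sum.inl v)) +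
      (∑ u : Fin s, c (Sum.inl u) (Sum.inr ())) = (m : ℝ)) :
    ENNReal.ofReal (((s : ℝ) + 2) / 3 - 2 * t / 3) ≤
        (∑ x : Fin s, weffRes c (Sum.inl x) (Sum.inr ())) ∧
      ((∑ x : Fin s, weffRes c (Sum.inl x) (Sum.inr ())) =
          ENNReal.ofReal (((s : ℝ) + 2) / 3 - 2 * t / 3) → t = 0) := by
  obtain ⟨k, hk, hk2⟩ := hint
  obtain ⟨j, hj, hj2⟩ := hroot
  set Y := fun x : Fin s => conductanceBound c (s / (s + 2)) (Sum.inl x) (Sum.inr ())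
  obtain ⟨hpos, hle, hlt⟩ := legal_component_sum_inv_bound (Y := Y) (j := j) (k := k) (t := t)
    (b := fun x => ∑ y, c (Sum.inl x) (Sum.inl y)) hs (by exact_mod_cast hj)
    (by linarith [show (s : ℝ) ≤ k + 1 by exact_mod_cast (by omega : s ≤ k + 1)])
    (by linarith [show (m : ℝ) + 1 = 2 * s + t by exact_mod_cast (by omega : m + 1 = 2 * s + t)])
    (fun x => hnonneg _ _) (fun x => sum_nonneg fun y _ => hnonneg _ _) hj2 (by linarith)
    fun x => (conductanceBound_inl_inr hloop _ x).trans (by rw [hj2])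
  have hsum :
      ENNReal.ofReal (∑ x, 1 / Y x) ≤ ∑ x : Fin s, weffRes c (Sum.inl x) (Sum.inr ()) :=
    (le_sum_of_subadditive _ ENNReal.ofReal_zero.le (fun _ _ => ENNReal.ofReal_add_le) _ _).trans
      (sum_le_sum fun x _ =>
        ofReal_inv_conductanceBound_le_weffRes hsymm hnonneg hloop Sum.inl_ne_inr _)
  refine ⟨(ENNReal.ofReal_le_ofReal hle).trans hsum, fun heq => ?_⟩
  by_contra ht0
  exact ((ENNReal.ofReal_lt_ofReal_iff hpos).2 (hlt ht0)).not_ge (heq ▸ hsum)
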